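/- arXiv:1706.05940 — 4 statements merged into one kernel-verified Lean document; each statement's English description precedes it below -/
import Mathlib

section
/- Let Σ be a symmetric positive semidefinite real p×p matrix with Σ ∈ 𝒮_𝒢. Then the matrix Σ − ΓΣ is symmetric and positive semidefinite. -/
open Matrix Finset

abbrev PairIdx (d : ℕ) := {p : Fin d × Fin d // p.1 < p.2}

/-- Pairs `r` and `s` lie in the same block: the unordered pairs of cluster labels coincide. -/
def sameBlock {d K : ℕ} (g : Fin d → Fin K) (r s : PairIdx d) : Prop :=
  (g r.1.1 = g s.1.1 ∧ g r.1.2 = g s.1.2) ∨ (g r.1.1 = g s.1.2 ∧ g r.1.2 = g s.1.1)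

instance {d K : ℕ} (g : Fin d → Fin K) : DecidableRel (sameBlock g) :=
  fun r s => by unfold sameBlock; infer_instance

/-- The overlap type `φ̄(r,s)`: the multiset of cluster labels of the elements of
`{i_r, j_r} ∩ {i_s, j_s}`.  The empty multiset encodes the type `(0,0)`, the singleton
`{k}` encodes `(0,k)`, and the two-element multiset `{k₁,k₂}` encodes
`(min(k₁,k₂), max(k₁,k₂))`. -/
def overlap {d K : ℕ} (g : Fin d → Fin K) (r s : PairIdx d) : Multiset (Fin K) :=
  (({r.1.1, r.1.2} ∩ {s.1.1, s.1.2} : Finset (Fin d)).val.map g)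

/-- The cardinality of the block containing `r`. -/
def blockCard {d K : ℕ} (g : Fin d → Fin K) (r : PairIdx d) : ℕ :=
  (Finset.univ.filter (fun t => sameBlock g r t)).card

/-- The blockwise-averaging matrix `Γ`. -/
noncomputable def Gamma {d K : ℕ} (g : Fin d → Fin K) :
    Matrix (PairIdx d) (PairIdx d) ℝ :=
  Matrix.of fun r s => if sameBlock g r s then (1 : ℝ) / (blockCard g r) else 0

/-- Membership in the class `𝒮_𝒢`. -/
def inSG {d K : ℕ} (g : Fin d → Fin K) (S : Matrix (PairIdx d) (PairIdx d) ℝ) : Prop :=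
  S.IsSymm ∧ ∀ r r' s s' : PairIdx d, sameBlock g r r' → sameBlock g s s' →
    overlap g r s = overlap g r' s' → S r s = S r' s'

section Aux

variable {d K : ℕ}

lemma sameBlock_refl (g : Fin d → Fin K) (r : PairIdx d) : sameBlock g r r := Or.inl ⟨rfl, rfl⟩

lemma sameBlock_symm {g : Fin d → Fin K} {r s : PairIdx d} (h : sameBlock g r s) :
    sameBlock g s r := by
  rcases h with ⟨a, b⟩ | ⟨a, b⟩
  · exact Or.inl ⟨a.symm, b.symm⟩
  · exact Or.inr ⟨b.symm, a.symm⟩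

lemma sameBlock_trans {g : Fin d → Fin K} {r s t : PairIdx d} (h1 : sameBlock g r s)
    (h2 : sameBlock g s t) : sameBlock g r t := by
  rcases h1 with ⟨a, b⟩ | ⟨a, b⟩ <;> rcases h2 with ⟨c, e⟩ | ⟨c, e⟩
  · exact Or.inl ⟨a.trans c, b.trans e⟩
  · exact Or.inr ⟨a.trans c, b.trans e⟩
  · exact Or.inr ⟨a.trans e, b.trans c⟩
  · exact Or.inl ⟨a.trans e, b.trans c⟩

/-- The block of `r`, as a finset. -/
def blk (g : Fin d → Fin K) (r : PairIdx d) : Finset (PairIdx d) :=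
  Finset.univ.filter (fun t => sameBlock g r t)

lemma mem_blk {g : Fin d → Fin K} {r t : PairIdx d} : t ∈ blk g r ↔ sameBlock g r t := by
  simp [blk]

lemma blockCard_eq_card (g : Fin d → Fin K) (r : PairIdx d) :
    blockCard g r = (blk g r).card := rfl

lemma blk_congr {g : Fin d → Fin K} {r s : PairIdx d} (h : sameBlock g r s) :
    blk g r = blk g s := by
  ext t
  simp only [mem_blk]
  exact ⟨fun ht => sameBlock_trans (sameBlock_symm h) ht, fun ht => sameBlock_trans h ht⟩

lemma blockCard_congr {g : Fin d → Fin K} {r s : PairIdx d} (h : sameBlock g r s) :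
    blockCard g r = blockCard g s := by
  rw [blockCard_eq_card, blockCard_eq_card, blk_congr h]

lemma blockCard_pos (g : Fin d → Fin K) (r : PairIdx d) : 0 < blockCard g r := by
  rw [blockCard_eq_card]
  exact Finset.card_pos.mpr ⟨r, mem_blk.mpr (sameBlock_refl g r)⟩

lemma blockCard_ne_zero (g : Fin d → Fin K) (r : PairIdx d) :
    ((blockCard g r : ℕ) : ℝ) ≠ 0 :=
  Nat.cast_ne_zero.mpr (blockCard_pos g r).ne'

/-- `g`-preserving swaps preserve `g`. -/
lemma swap_pres {g : Fin d → Fin K} {a b : Fin d} (h : g a = g b) (x : Fin d) :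
    g (Equiv.swap a b x) = g x := by
  rcases eq_or_ne x a with rfl | ha
  · rw [Equiv.swap_apply_left]; exact h.symm
  rcases eq_or_ne x b with rfl | hb
  · rw [Equiv.swap_apply_right]; exact h
  · rw [Equiv.swap_apply_of_ne_of_ne ha hb]

/-- Given matching labels, there is a cluster-preserving permutation sending `i ↦ i'`, `j ↦ j'`. -/
lemma exists_perm_of_labels (g : Fin d → Fin K) {i j i' j' : Fin d}
    (hij : i ≠ j) (hij' : i' ≠ j') (h1 : g i = g i') (h2 : g j = g j') :
    ∃ π : Equiv.Perm (Fin d), (∀ x, g (π x) = g x) ∧ π i = i' ∧ π j = j' := by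
  set j'' := Equiv.swap i i' j with hj''
  have hgj'' : g j'' = g j := swap_pres h1 j
  have hji : j ≠ i := fun h => hij h.symm
  have hj''ne : j'' ≠ i' := by
    rcases eq_or_ne j i' with rfl | hji'
    · rw [hj'', Equiv.swap_apply_right]; exact hij
    · rw [hj'', Equiv.swap_apply_of_ne_of_ne hji hji']; exact hji'
  refine ⟨(Equiv.swap i i').trans (Equiv.swap j'' j'), fun x => ?_, ?_, ?_⟩
  · simp only [Equiv.trans_apply]
    rw [swap_pres (hgj''.trans h2) _, swap_pres h1]
  · simp only [Equiv.trans_apply, Equiv.swap_apply_left]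
    exact Equiv.swap_apply_of_ne_of_ne hj''ne.symm hij'
  · simp only [Equiv.trans_apply, ← hj'']
    exact Equiv.swap_apply_left j'' j'

/-- The induced map on pairs of a permutation. -/
def pmap (π : Equiv.Perm (Fin d)) (r : PairIdx d) : PairIdx d :=
  if h : π r.1.1 < π r.1.2 then ⟨(π r.1.1, π r.1.2), h⟩
  else ⟨(π r.1.2, π r.1.1),
    lt_of_le_of_ne (not_lt.mp h) (fun he => (ne_of_gt r.2) (π.injective he))⟩

/-- The unordered pair underlying a pair index. -/
def toPair (r : PairIdx d) : Finset (Fin d) := {r.1.1, r.1.2}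

lemma toPair_pmap (π : Equiv.Perm (Fin d)) (r : PairIdx d) :
    toPair (pmap π r) = (toPair r).image π := by
  unfold pmap toPair
  split
  · simp [Finset.image_insert, Finset.image_singleton]
  · rw [Finset.image_insert, Finset.image_singleton]
    exact Finset.pair_comm _ _

lemma pair_ext {r s : PairIdx d} (h : toPair r = toPair s) : r = s := by
  have hr : r.1.1.val < r.1.2.val := r.2
  have hs : s.1.1.val < s.1.2.val := s.2
  have h1 : r.1.1 = s.1.1 ∨ r.1.1 = s.1.2 := by
    have : r.1.1 ∈ toPair s := by rw [← h]; simp [toPair]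
    simpa [toPair] using this
  have h2 : r.1.2 = s.1.1 ∨ r.1.2 = s.1.2 := by
    have : r.1.2 ∈ toPair s := by rw [← h]; simp [toPair]
    simpa [toPair] using this
  have h3 : s.1.1 = r.1.1 ∨ s.1.1 = r.1.2 := by
    have : s.1.1 ∈ toPair r := by rw [h]; simp [toPair]
    simpa [toPair] using this
  have e1 := h1.imp (congrArg Fin.val) (congrArg Fin.val)
  have e2 := h2.imp (congrArg Fin.val) (congrArg Fin.val)
  have e3 := h3.imp (congrArg Fin.val) (congrArg Fin.val)
  have key : r.1.1.val = s.1.1.val ∧ r.1.2.val = s.1.2.val := by omega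
  exact Subtype.ext (Prod.ext (Fin.ext key.1) (Fin.ext key.2))

lemma pmap_pmap_inv (π : Equiv.Perm (Fin d)) (r : PairIdx d) :
    pmap π⁻¹ (pmap π r) = r := by
  apply pair_ext
  rw [toPair_pmap, toPair_pmap, Finset.image_image]
  have : (⇑π⁻¹ ∘ ⇑π) = id := by funext x; simp
  rw [this, Finset.image_id]

/-- `pmap π` as an equivalence. -/
def pEquiv (π : Equiv.Perm (Fin d)) : PairIdx d ≃ PairIdx d where
  toFun := pmap π
  invFun := pmap π⁻¹
  left_inv := pmap_pmap_inv π
  right_inv := fun r => by simpa using pmap_pmap_inv π⁻¹ r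

lemma sameBlock_pmap {g : Fin d → Fin K} {π : Equiv.Perm (Fin d)}
    (hg : ∀ x, g (π x) = g x) (r : PairIdx d) : sameBlock g (pmap π r) r := by
  unfold pmap
  split
  · exact Or.inl ⟨hg _, hg _⟩
  · exact Or.inr ⟨hg _, hg _⟩

lemma overlap_pmap {g : Fin d → Fin K} {π : Equiv.Perm (Fin d)}
    (hg : ∀ x, g (π x) = g x) (r s : PairIdx d) :
    overlap g (pmap π r) (pmap π s) = overlap g r s := by
  show ((toPair (pmap π r) ∩ toPair (pmap π s)).val.map g)
      = ((toPair r ∩ toPair s).val.map g)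
  rw [toPair_pmap, toPair_pmap, ← Finset.image_inter _ _ π.injective]
  have himg : Finset.image (⇑π) (toPair r ∩ toPair s)
      = (toPair r ∩ toPair s).map π.toEmbedding := by
    rw [Finset.map_eq_image]; rfl
  rw [himg, Finset.map_val, Multiset.map_map]
  exact Multiset.map_congr rfl (fun x _ => hg x)

lemma sig_inv {g : Fin d → Fin K} {Sig : Matrix (PairIdx d) (PairIdx d) ℝ}
    (hSG : inSG g Sig) {π : Equiv.Perm (Fin d)} (hg : ∀ x, g (π x) = g x)
    (r s : PairIdx d) : Sig (pmap π r) (pmap π s) = Sig r s :=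
  hSG.2 _ r _ s (sameBlock_pmap hg r) (sameBlock_pmap hg s) (overlap_pmap hg r s)

lemma exists_pmap {g : Fin d → Fin K} {r s : PairIdx d} (h : sameBlock g r s) :
    ∃ π : Equiv.Perm (Fin d), (∀ x, g (π x) = g x) ∧ pmap π r = s := by
  have hr := r.2; have hs := s.2
  rcases h with ⟨h1, h2⟩ | ⟨h1, h2⟩
  · obtain ⟨π, hgπ, hi, hj⟩ := exists_perm_of_labels g (ne_of_lt hr) (ne_of_lt hs) h1 h2
    refine ⟨π, hgπ, ?_⟩
    have hlt : π r.1.1 < π r.1.2 := by rw [hi, hj]; exact hs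
    unfold pmap
    rw [dif_pos hlt]
    exact Subtype.ext (Prod.ext hi hj)
  · obtain ⟨π, hgπ, hi, hj⟩ := exists_perm_of_labels g (ne_of_lt hr) (ne_of_gt hs) h1 h2
    refine ⟨π, hgπ, ?_⟩
    have hlt : ¬ π r.1.1 < π r.1.2 := by rw [hi, hj]; exact not_lt.mpr hs.le
    unfold pmap
    rw [dif_neg hlt]
    exact Subtype.ext (Prod.ext hj hi)

/-- The block-row sum of a matrix in `𝒮_𝒢` is constant along blocks in the second argument. -/
lemma rowsum_congr {g : Fin d → Fin K} {Sig : Matrix (PairIdx d) (PairIdx d) ℝ}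
    (hSG : inSG g Sig) (r : PairIdx d) {s s' : PairIdx d} (h : sameBlock g s s') :
    ∑ t ∈ blk g r, Sig t s = ∑ t ∈ blk g r, Sig t s' := by
  obtain ⟨π, hgπ, hps⟩ := exists_pmap h
  calc ∑ t ∈ blk g r, Sig t s
      = ∑ t ∈ blk g r, Sig (pmap π t) (pmap π s) :=
        Finset.sum_congr rfl (fun t _ => (sig_inv hSG hgπ t s).symm)
    _ = ∑ t ∈ blk g r, Sig t (pmap π s) := by
        refine Finset.sum_equiv (pEquiv π) (fun t => ?_) (fun t _ => rfl)
        simp only [mem_blk]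
        constructor
        · intro ht
          exact sameBlock_trans ht (sameBlock_symm (sameBlock_pmap hgπ t))
        · intro ht
          exact sameBlock_trans ht (sameBlock_pmap hgπ t)
    _ = ∑ t ∈ blk g r, Sig t s' := by rw [hps]

lemma GS_apply {g : Fin d → Fin K} (Sig : Matrix (PairIdx d) (PairIdx d) ℝ)
    (r s : PairIdx d) :
    (Gamma g * Sig) r s = ((blockCard g r : ℕ) : ℝ)⁻¹ * ∑ t ∈ blk g r, Sig t s := by
  rw [Matrix.mul_apply]
  simp only [Gamma, Matrix.of_apply, ite_mul, zero_mul, one_div]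
  rw [← Finset.sum_filter, ← Finset.mul_sum]
  rfl

lemma Gamma_transpose (g : Fin d → Fin K) : (Gamma g)ᵀ = Gamma g := by
  apply Matrix.ext; intro r s
  rw [Matrix.transpose_apply]
  simp only [Gamma, Matrix.of_apply]
  by_cases h : sameBlock g r s
  · rw [if_pos h, if_pos (sameBlock_symm h), blockCard_congr h]
  · rw [if_neg h, if_neg (fun hc => h (sameBlock_symm hc))]

lemma Gamma_idem (g : Fin d → Fin K) : Gamma g * Gamma g = Gamma g := by
  apply Matrix.ext; intro r s
  rw [Matrix.mul_apply]
  simp only [Gamma, Matrix.of_apply, one_div]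
  by_cases h : sameBlock g r s
  · rw [if_pos h]
    have hterm : ∀ t, (if sameBlock g r t then ((blockCard g r : ℕ) : ℝ)⁻¹ else 0) *
        (if sameBlock g t s then ((blockCard g t : ℕ) : ℝ)⁻¹ else 0) =
        if sameBlock g r t then ((blockCard g r : ℕ) : ℝ)⁻¹ * ((blockCard g r : ℕ) : ℝ)⁻¹
        else 0 := by
      intro t
      by_cases ht : sameBlock g r t
      · rw [if_pos ht, if_pos ht, if_pos (sameBlock_trans (sameBlock_symm ht) h),
          ← blockCard_congr ht]
      · rw [if_neg ht, if_neg ht, zero_mul]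
    rw [Finset.sum_congr rfl (fun t _ => hterm t), ← Finset.sum_filter,
      Finset.sum_const, nsmul_eq_mul]
    have hN := blockCard_ne_zero g r
    rw [show (Finset.univ.filter (fun t => sameBlock g r t)).card = blockCard g r from rfl]
    field_simp
  · rw [if_neg h]
    apply Finset.sum_eq_zero; intro t _
    by_cases ht : sameBlock g r t
    · rw [if_neg (fun hts => h (sameBlock_trans ht hts)), mul_zero]
    · rw [if_neg ht, zero_mul]

lemma GS_isSymm {g : Fin d → Fin K} {Sig : Matrix (PairIdx d) (PairIdx d) ℝ}
    (hSG : inSG g Sig) : (Gamma g * Sig)ᵀ = Gamma g * Sig := by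
  have hsym : ∀ a b : PairIdx d, Sig a b = Sig b a := by
    intro a b
    nth_rewrite 1 [← hSG.1]
    rw [Matrix.transpose_apply]
  apply Matrix.ext; intro r s
  rw [Matrix.transpose_apply, GS_apply, GS_apply]
  have key : ((blockCard g r : ℕ) : ℝ) * ∑ u ∈ blk g s, Sig u r
      = ((blockCard g s : ℕ) : ℝ) * ∑ t ∈ blk g r, Sig t s := by
    calc ((blockCard g r : ℕ) : ℝ) * ∑ u ∈ blk g s, Sig u r
        = ∑ t ∈ blk g r, ∑ u ∈ blk g s, Sig u r := by
          rw [Finset.sum_const, nsmul_eq_mul, blockCard_eq_card]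
      _ = ∑ t ∈ blk g r, ∑ u ∈ blk g s, Sig u t := by
          refine Finset.sum_congr rfl (fun t ht => ?_)
          exact rowsum_congr hSG s (mem_blk.mp ht)
      _ = ∑ u ∈ blk g s, ∑ t ∈ blk g r, Sig u t := Finset.sum_comm
      _ = ∑ u ∈ blk g s, ∑ t ∈ blk g r, Sig t u := by
          exact Finset.sum_congr rfl (fun u _ => Finset.sum_congr rfl (fun t _ => hsym u t))
      _ = ∑ u ∈ blk g s, ∑ t ∈ blk g r, Sig t s := by
          refine Finset.sum_congr rfl (fun u hu => ?_)
          exact rowsum_congr hSG r (sameBlock_symm (mem_blk.mp hu))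
      _ = ((blockCard g s : ℕ) : ℝ) * ∑ t ∈ blk g r, Sig t s := by
          rw [Finset.sum_const, nsmul_eq_mul, blockCard_eq_card]
  have hNr := blockCard_ne_zero g r
  have hNs := blockCard_ne_zero g s
  field_simp
  linarith [key]

end Aux

/-- If `Σ` is a symmetric positive semidefinite matrix in `𝒮_𝒢`, then
`Σ − ΓΣ` is symmetric and positive semidefinite. -/
theorem statement_2 {d K : ℕ} (hd : 2 ≤ d) (hK : 1 ≤ K)
    (g : Fin d → Fin K) (hg : Function.Surjective g)
    (Sig : Matrix (PairIdx d) (PairIdx d) ℝ) (hpsd : Sig.PosSemidef) (hSG : inSG g Sig) :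
    (Sig - Gamma g * Sig).IsSymm ∧ (Sig - Gamma g * Sig).PosSemidef := by
  have hsymS : Sigᵀ = Sig := hSG.1
  have hGS : (Gamma g * Sig)ᵀ = Gamma g * Sig := GS_isSymm hSG
  have hcomm : Sig * Gamma g = Gamma g * Sig := by
    calc Sig * Gamma g = Sigᵀ * (Gamma g)ᵀ := by rw [hsymS, Gamma_transpose]
      _ = (Gamma g * Sig)ᵀ := (Matrix.transpose_mul _ _).symm
      _ = Gamma g * Sig := hGS
  have hGSG : Gamma g * Sig * Gamma g = Gamma g * Sig := by
    rw [Matrix.mul_assoc, hcomm, ← Matrix.mul_assoc, Gamma_idem]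
  have key : Sig - Gamma g * Sig = (1 - Gamma g) * Sig * (1 - Gamma g)ᴴ := by
    have hGH : (1 - Gamma g)ᴴ = 1 - Gamma g := by
      rw [conjTranspose_eq_transpose_of_trivial, Matrix.transpose_sub, Matrix.transpose_one,
        Gamma_transpose]
    rw [hGH, Matrix.sub_mul, Matrix.one_mul, Matrix.mul_sub, Matrix.mul_one,
      Matrix.sub_mul, hGSG, hcomm]
    abel
  constructor
  · rw [Matrix.IsSymm, Matrix.transpose_sub, hsymS, hGS]
  · rw [key]
    exact hpsd.mul_mul_conjTranspose_same (1 - Gamma g)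
end

section
/- Let r₁, r₂ ∈ ℬ_{ℓ₁} and s₁, s₂ ∈ ℬ_{ℓ₂} be pairs with φ̄(r₁,s₁) = φ̄(r₂,s₂). Then for every block ℬ_λ and all overlap types κ₁, κ₂, the sets {t ∈ ℬ_λ : φ̄(r₁,t) = κ₁ and φ̄(s₁,t) = κ₂} and {t ∈ ℬ_λ : φ̄(r₂,t) = κ₁ and φ̄(s₂,t) = κ₂} have the same cardinality. -/
/-!
It suffices to find a cluster-preserving permutation `σ` of `Fin d` with
`σ {i_{r₁}, j_{r₁}} = {i_{r₂}, j_{r₂}}` and `σ {i_{s₁}, j_{s₁}} = {i_{s₂}, j_{s₂}}`: acting on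
pairs, `σ` preserves blocks and carries `φ̄(r₁, ·)`, `φ̄(s₁, ·)` to `φ̄(r₂, ·)`, `φ̄(s₂, ·)`, so it
maps one set bijectively onto the other. By hypothesis `R = {i_r, j_r}`, `S = {i_s, j_s}` and
`R ∩ S` meet every cluster in as many points for `(r₁, s₁)` as for `(r₂, s₂)`; hence so do
`R \ S`, `S \ R` and `(R ∪ S)ᶜ`, and `σ` is obtained by matching points region by region
within each cluster.
-/

open Matrix Finset

theorem exists_perm_of_map_univ_eq {α γ : Type*} [Fintype α] {f₁ f₂ : α → γ}
    (h : univ.val.map f₁ = univ.val.map f₂) : ∃ σ : Equiv.Perm α, ∀ x, f₂ (σ x) = f₁ x := by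
  classical
  have hfiber (c : γ) : Fintype.card {x // f₁ x = c} = Fintype.card {x // f₂ x = c} := by
    have := congrArg (Multiset.count c) h
    simp only [Multiset.count_map] at this
    simpa [Fintype.card_subtype, Finset.card_def, Finset.filter_val, eq_comm] using this
  exact ⟨Equiv.ofFiberEquiv fun c => Fintype.equivOfCardEq (hfiber c), Equiv.ofFiberEquiv_map _⟩

theorem map_prod_decide_mem_eq {α γ : Type*} [DecidableEq α] {ℓ₁ ℓ₂ : α → γ}
    {U₁ U₂ X₁ X₂ : Finset α} (hU : U₁.val.map ℓ₁ = U₂.val.map ℓ₂)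
    (hX : (U₁ ∩ X₁).val.map ℓ₁ = (U₂ ∩ X₂).val.map ℓ₂) :
    U₁.val.map (fun x => (ℓ₁ x, decide (x ∈ X₁))) =
      U₂.val.map (fun x => (ℓ₂ x, decide (x ∈ X₂))) := by
  have hsplit (U X : Finset α) : U.val = (U ∩ X).val + (U \ X).val := by
    rw [← filter_mem_eq_inter, ← filter_notMem_eq_sdiff, filter_val, filter_val,
      Multiset.filter_add_not]
  have hmap (U X : Finset α) (ℓ : α → γ) :
      U.val.map (fun x => (ℓ x, decide (x ∈ X))) =
        ((U ∩ X).val.map ℓ).map (·, true) + ((U \ X).val.map ℓ).map (·, false) := by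
    rw [hsplit U X, Multiset.map_add, Multiset.map_map, Multiset.map_map]
    congr 1
    · exact Multiset.map_congr rfl fun x hx => by simp [(mem_inter.1 hx).2]
    · exact Multiset.map_congr rfl fun x hx => by simp [(mem_sdiff.1 hx).2]
  have hsdiff : (U₁ \ X₁).val.map ℓ₁ = (U₂ \ X₂).val.map ℓ₂ := by
    rw [hsplit U₁ X₁, hsplit U₂ X₂, Multiset.map_add, Multiset.map_add, hX] at hU
    exact add_left_cancel hU
  rw [hmap, hmap, hX, hsdiff]

theorem exists_perm_map_eq_of_map_eq {α β : Type*} [Fintype α] [DecidableEq α] (g : α → β)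
    {R₁ R₂ S₁ S₂ : Finset α} (hR : R₁.val.map g = R₂.val.map g)
    (hS : S₁.val.map g = S₂.val.map g) (hRS : (R₁ ∩ S₁).val.map g = (R₂ ∩ S₂).val.map g) :
    ∃ σ : Equiv.Perm α, (∀ x, g (σ x) = g x) ∧
      R₁.map σ.toEmbedding = R₂ ∧ S₁.map σ.toEmbedding = S₂ := by
  have hSR := map_prod_decide_mem_eq (X₁ := R₁) (X₂ := R₂) hS
    (by rwa [inter_comm, inter_comm S₂])
  have hR' := map_prod_decide_mem_eq (U₁ := univ) (U₂ := univ) rfl (by simpa using hR)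
  have hRS' := map_prod_decide_mem_eq (U₁ := univ) (U₂ := univ) hR' (by simpa using hSR)
  obtain ⟨σ, hσ⟩ := exists_perm_of_map_univ_eq hRS'
  simp only [Prod.ext_iff, decide_eq_decide] at hσ
  refine ⟨σ, fun x => (hσ x).1.1, ?_, ?_⟩ <;> ext y <;>
    simp [mem_map_equiv, ← (hσ (σ.symm y)).1.2, ← (hσ (σ.symm y)).2]

theorem Multiset.pair_eq_pair_iff {α : Type*} {a b c e : α} :
    ({a, b} : Multiset α) = {c, e} ↔ a = c ∧ b = e ∨ a = e ∧ b = c := by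
  refine ⟨fun h => ?_, ?_⟩
  · rcases Multiset.cons_eq_cons.1 h with ⟨rfl, hbe⟩ | ⟨-, cs, hb, he⟩
    · exact .inl ⟨rfl, Multiset.singleton_inj.1 hbe⟩
    · obtain rfl : cs = 0 := by simpa using congrArg Multiset.card hb
      exact .inr ⟨Multiset.singleton_inj.1 he.symm, Multiset.singleton_inj.1 hb⟩
  · rintro (⟨rfl, rfl⟩ | ⟨rfl, rfl⟩)
    · rfl
    · exact Multiset.pair_comm _ _

theorem Finset.val_map_map_perm {α β : Type*} {g : α → β} {σ : Equiv.Perm α}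
    (hσ : ∀ x, g (σ x) = g x) (X : Finset α) : (X.map σ.toEmbedding).val.map g = X.val.map g := by
  rw [map_val, Multiset.map_map]
  exact Multiset.map_congr rfl fun x _ => hσ x

namespace PairIdx

variable {d K : ℕ}

def toFinset (r : PairIdx d) : Finset (Fin d) := {r.1.1, r.1.2}

theorem toFinset_injective : Function.Injective (toFinset (d := d)) := by
  intro r s h
  have h₁ : r.1.1 ∈ s.toFinset := h ▸ by simp [toFinset]
  have h₂ : r.1.2 ∈ s.toFinset := h ▸ by simp [toFinset]
  have hr := r.2
  have hs := s.2
  simp only [toFinset, mem_insert, mem_singleton] at h₁ h₂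
  apply Subtype.ext; apply Prod.ext <;> grind

theorem val_map_toFinset (g : Fin d → Fin K) (r : PairIdx d) :
    r.toFinset.val.map g = {g r.1.1, g r.1.2} := by
  rw [toFinset, insert_val_of_notMem (by simpa using r.2.ne)]
  rfl

theorem sameBlock_iff_map_toFinset_eq (g : Fin d → Fin K) (r s : PairIdx d) :
    sameBlock g r s ↔ r.toFinset.val.map g = s.toFinset.val.map g := by
  rw [val_map_toFinset, val_map_toFinset, Multiset.pair_eq_pair_iff, sameBlock]

theorem overlap_eq_map_inter (g : Fin d → Fin K) (r s : PairIdx d) :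
    overlap g r s = (r.toFinset ∩ s.toFinset).val.map g := rfl

def permMap (σ : Equiv.Perm (Fin d)) (t : PairIdx d) : PairIdx d :=
  if h : σ t.1.1 < σ t.1.2 then ⟨(σ t.1.1, σ t.1.2), h⟩
  else ⟨(σ t.1.2, σ t.1.1), (not_lt.1 h).lt_of_ne (σ.injective.ne t.2.ne')⟩

theorem toFinset_permMap (σ : Equiv.Perm (Fin d)) (t : PairIdx d) :
    (permMap σ t).toFinset = t.toFinset.map σ.toEmbedding := by
  unfold permMap
  split <;> simp [toFinset, pair_comm]

def permEquiv (σ : Equiv.Perm (Fin d)) : PairIdx d ≃ PairIdx d where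
  toFun := permMap σ
  invFun := permMap σ⁻¹
  left_inv t := toFinset_injective <| by simp [toFinset_permMap, Finset.map_map]
  right_inv t := toFinset_injective <| by simp [toFinset_permMap, Finset.map_map]

theorem toFinset_permEquiv (σ : Equiv.Perm (Fin d)) (t : PairIdx d) :
    (permEquiv σ t).toFinset = t.toFinset.map σ.toEmbedding :=
  toFinset_permMap σ t

variable {g : Fin d → Fin K} {σ : Equiv.Perm (Fin d)}

theorem sameBlock_permEquiv_iff (hσ : ∀ x, g (σ x) = g x) (t₀ t : PairIdx d) :
    sameBlock g t₀ (permEquiv σ t) ↔ sameBlock g t₀ t := by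
  rw [sameBlock_iff_map_toFinset_eq, sameBlock_iff_map_toFinset_eq, toFinset_permEquiv,
    Finset.val_map_map_perm hσ]

theorem overlap_permEquiv (hσ : ∀ x, g (σ x) = g x) {r r' : PairIdx d}
    (hr : r.toFinset.map σ.toEmbedding = r'.toFinset) (t : PairIdx d) :
    overlap g r' (permEquiv σ t) = overlap g r t := by
  rw [overlap_eq_map_inter, overlap_eq_map_inter, toFinset_permEquiv, ← hr, ← map_inter,
    Finset.val_map_map_perm hσ]

end PairIdx

theorem statement_10_general {d K : ℕ}
    (g : Fin d → Fin K)
    (r₁ r₂ s₁ s₂ : PairIdx d)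
    (hr : sameBlock g r₁ r₂) (hs : sameBlock g s₁ s₂)
    (hφ : overlap g r₁ s₁ = overlap g r₂ s₂)
    (t₀ : PairIdx d) (κ₁ κ₂ : Multiset (Fin K)) :
    (Finset.univ.filter
        (fun t => sameBlock g t₀ t ∧ overlap g r₁ t = κ₁ ∧ overlap g s₁ t = κ₂)).card
      = (Finset.univ.filter
        (fun t => sameBlock g t₀ t ∧ overlap g r₂ t = κ₁ ∧ overlap g s₂ t = κ₂)).card := by
  obtain ⟨σ, hσ, hσr, hσs⟩ := exists_perm_map_eq_of_map_eq g
    ((PairIdx.sameBlock_iff_map_toFinset_eq g r₁ r₂).1 hr)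
    ((PairIdx.sameBlock_iff_map_toFinset_eq g s₁ s₂).1 hs) hφ
  refine card_equiv (PairIdx.permEquiv σ) fun t => ?_
  simp only [mem_filter, mem_univ, true_and, PairIdx.sameBlock_permEquiv_iff hσ,
    PairIdx.overlap_permEquiv hσ hσr, PairIdx.overlap_permEquiv hσ hσs]

/-- If `r₁, r₂` lie in the same block, `s₁, s₂` lie in the same block, and
`φ̄(r₁,s₁) = φ̄(r₂,s₂)`, then for every block (represented by any of its elements `t₀`)
and all overlap types `κ₁, κ₂`, the sets
`{t ∈ ℬ_λ : φ̄(r₁,t) = κ₁ ∧ φ̄(s₁,t) = κ₂}` and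
`{t ∈ ℬ_λ : φ̄(r₂,t) = κ₁ ∧ φ̄(s₂,t) = κ₂}` have the same cardinality. -/
theorem statement_10 {d K : ℕ} (hd : 2 ≤ d) (hK : 1 ≤ K)
    (g : Fin d → Fin K) (hg : Function.Surjective g)
    (r₁ r₂ s₁ s₂ : PairIdx d)
    (hr : sameBlock g r₁ r₂) (hs : sameBlock g s₁ s₂)
    (hφ : overlap g r₁ s₁ = overlap g r₂ s₂)
    (t₀ : PairIdx d) (κ₁ κ₂ : Multiset (Fin K)) :
    (Finset.univ.filter
        (fun t => sameBlock g t₀ t ∧ overlap g r₁ t = κ₁ ∧ overlap g s₁ t = κ₂)).card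
      = (Finset.univ.filter
        (fun t => sameBlock g t₀ t ∧ overlap g r₂ t = κ₁ ∧ overlap g s₂ t = κ₂)).card :=
  statement_10_general g r₁ r₂ s₁ s₂ hr hs hφ t₀ κ₁ κ₂
end

section
/- Let B be the p×L block membership matrix, with rows indexed by P and columns indexed by the blocks, defined by B_{rℓ} = 1 if r ∈ ℬ_ℓ and B_{rℓ} = 0 otherwise. Then for every S ∈ 𝒮_𝒢, Bᵀ S = Bᵀ S Γ. -/
open Matrix Finset

/-- The blocks form the quotient of the pair set by the `sameBlock` equivalence. -/
def blockSetoid {d K : ℕ} (g : Fin d → Fin K) : Setoid (PairIdx d) where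
  r := sameBlock g
  iseqv := by
    constructor
    · intro x; exact Or.inl ⟨rfl, rfl⟩
    · rintro x y (⟨a, b⟩ | ⟨a, b⟩)
      · exact Or.inl ⟨a.symm, b.symm⟩
      · exact Or.inr ⟨b.symm, a.symm⟩
    · rintro x y z (⟨a, b⟩ | ⟨a, b⟩) (⟨c, e⟩ | ⟨c, e⟩)
      · exact Or.inl ⟨a.trans c, b.trans e⟩
      · exact Or.inr ⟨a.trans c, b.trans e⟩
      · exact Or.inr ⟨a.trans e, b.trans c⟩
      · exact Or.inl ⟨a.trans e, b.trans c⟩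

open Classical in
/-- The block membership matrix `B`, with rows indexed by pairs and columns indexed by
blocks: `B_{rℓ} = 1` if `r ∈ ℬ_ℓ` and `0` otherwise. -/
noncomputable def blockMembership {d K : ℕ} (g : Fin d → Fin K) :
    Matrix (PairIdx d) (Quotient (blockSetoid g)) ℝ :=
  Matrix.of fun r ℓ => if Quotient.mk (blockSetoid g) r = ℓ then 1 else 0

section Aux

variable {d K : ℕ} (g : Fin d → Fin K)

lemma swap_g {a b : Fin d} (h : g a = g b) (x : Fin d) :
    g (Equiv.swap a b x) = g x := by
  rcases eq_or_ne x a with rfl | hxa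
  · simp [h]
  rcases eq_or_ne x b with rfl | hxb
  · simp [h]
  · rw [Equiv.swap_apply_of_ne_of_ne hxa hxb]

lemma exists_perm {t s : PairIdx d} (h : sameBlock g t s) :
    ∃ π : Equiv.Perm (Fin d), (∀ x, g (π x) = g x) ∧
      ((π t.1.1 = s.1.1 ∧ π t.1.2 = s.1.2) ∨ (π t.1.1 = s.1.2 ∧ π t.1.2 = s.1.1)) := by
  obtain ⟨a, b, hab⟩ : ∃ a b, t.1 = (a, b) := ⟨t.1.1, t.1.2, rfl⟩
  have htab : t.1.1 ≠ t.1.2 := ne_of_lt t.2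
  have hsab : s.1.1 ≠ s.1.2 := ne_of_lt s.2
  rcases h with ⟨h1, h2⟩ | ⟨h1, h2⟩
  · set π₁ := Equiv.swap t.1.1 s.1.1 with hπ₁
    set π₂ := Equiv.swap (π₁ t.1.2) s.1.2 with hπ₂
    have hg1 : ∀ x, g (π₁ x) = g x := swap_g g h1
    have hg2 : ∀ x, g (π₂ x) = g x := swap_g g (by rw [hg1]; exact h2)
    refine ⟨π₁.trans π₂, fun x => by simp [Equiv.trans_apply, hg1, hg2], Or.inl ⟨?_, ?_⟩⟩
    · have h3 : s.1.1 ≠ π₁ t.1.2 := by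
        intro he
        apply htab
        have := congrArg π₁ he
        rw [hπ₁] at this
        simpa [Equiv.swap_apply_right] using this
      simp only [Equiv.trans_apply, hπ₁, Equiv.swap_apply_left]
      exact Equiv.swap_apply_of_ne_of_ne h3 hsab
    · simp only [Equiv.trans_apply]
      rw [hπ₂, Equiv.swap_apply_left]
  · set π₁ := Equiv.swap t.1.1 s.1.2 with hπ₁
    set π₂ := Equiv.swap (π₁ t.1.2) s.1.1 with hπ₂
    have hg1 : ∀ x, g (π₁ x) = g x := swap_g g h1
    have hg2 : ∀ x, g (π₂ x) = g x := swap_g g (by rw [hg1]; exact h2)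
    refine ⟨π₁.trans π₂, fun x => by simp [Equiv.trans_apply, hg1, hg2], Or.inr ⟨?_, ?_⟩⟩
    · have h3 : s.1.2 ≠ π₁ t.1.2 := by
        intro he
        apply htab
        have := congrArg π₁ he
        rw [hπ₁] at this
        simpa [Equiv.swap_apply_right] using this
      simp only [Equiv.trans_apply, hπ₁, Equiv.swap_apply_left]
      exact Equiv.swap_apply_of_ne_of_ne h3 hsab.symm
    · simp only [Equiv.trans_apply]
      rw [hπ₂, Equiv.swap_apply_left]

def permPair (π : Equiv.Perm (Fin d)) (r : PairIdx d) : PairIdx d :=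
  if h : π r.1.1 < π r.1.2 then ⟨(π r.1.1, π r.1.2), h⟩
  else ⟨(π r.1.2, π r.1.1),
    lt_of_le_of_ne (not_lt.1 h) (fun he => (ne_of_lt r.2).symm (π.injective he))⟩

lemma permPair_elems (π : Equiv.Perm (Fin d)) (r : PairIdx d) :
    ({(permPair π r).1.1, (permPair π r).1.2} : Finset (Fin d)) = {π r.1.1, π r.1.2} := by
  unfold permPair
  split <;> simp [Finset.pair_comm]

lemma permPair_injective (π : Equiv.Perm (Fin d)) :
    Function.Injective (permPair (d := d) π) := by
  intro r r' h
  unfold permPair at h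
  have hr := r.2
  have hr' := r'.2
  apply Subtype.ext
  split at h <;> split at h <;>
    simp only [Subtype.mk.injEq, Prod.mk.injEq] at h <;>
    obtain ⟨h1, h2⟩ := h
  · exact Prod.ext (π.injective h1) (π.injective h2)
  · have e1 := π.injective h1
    have e2 := π.injective h2
    have : r'.1.2 < r'.1.1 := by rw [← e1, ← e2]; exact hr
    exact absurd hr' (not_lt.2 this.le)
  · have e1 := π.injective h1
    have e2 := π.injective h2
    have : r'.1.2 < r'.1.1 := by rw [← e2, ← e1]; exact hr
    exact absurd hr' (not_lt.2 this.le)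
  · exact Prod.ext (π.injective h2) (π.injective h1)

end Aux

section Aux2

variable {d K : ℕ} (g : Fin d → Fin K)

lemma sameBlock_permPair (π : Equiv.Perm (Fin d)) (hgπ : ∀ x, g (π x) = g x)
    (r : PairIdx d) : sameBlock g (permPair π r) r := by
  unfold permPair
  split
  · exact Or.inl ⟨hgπ _, hgπ _⟩
  · exact Or.inr ⟨hgπ _, hgπ _⟩

lemma overlap_permPair (π : Equiv.Perm (Fin d)) (hgπ : ∀ x, g (π x) = g x)
    (r t : PairIdx d) :
    overlap g (permPair π r) (permPair π t) = overlap g r t := by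
  classical
  unfold overlap
  rw [permPair_elems, permPair_elems]
  have himg : ∀ a b : Fin d,
      ({π a, π b} : Finset (Fin d)) = Finset.map ⟨π, π.injective⟩ {a, b} := by
    intro a b; simp
  rw [himg, himg, ← Finset.map_inter, Finset.map_val, Multiset.map_map]
  exact Multiset.map_congr rfl (fun x _ => hgπ x)

lemma permPair_eq {t s : PairIdx d} (π : Equiv.Perm (Fin d))
    (hor : (π t.1.1 = s.1.1 ∧ π t.1.2 = s.1.2) ∨ (π t.1.1 = s.1.2 ∧ π t.1.2 = s.1.1)) :
    permPair π t = s := by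
  rcases hor with ⟨h1, h2⟩ | ⟨h1, h2⟩
  · have hlt : π t.1.1 < π t.1.2 := by rw [h1, h2]; exact s.2
    simp only [permPair, dif_pos hlt]
    exact Subtype.ext (Prod.ext h1 h2)
  · have hlt : ¬ (π t.1.1 < π t.1.2) := by rw [h1, h2]; exact not_lt.2 s.2.le
    simp only [permPair, dif_neg hlt]
    exact Subtype.ext (Prod.ext h2 h1)

lemma blockCard_eq {t s : PairIdx d} (h : sameBlock g t s) :
    blockCard g t = blockCard g s := by
  unfold blockCard
  congr 1
  ext x
  simp only [Finset.mem_filter, Finset.mem_univ, true_and]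
  exact ⟨fun hx => (blockSetoid g).iseqv.trans ((blockSetoid g).iseqv.symm h) hx,
    fun hx => (blockSetoid g).iseqv.trans h hx⟩

end Aux2

/-- For every `S ∈ 𝒮_𝒢`, `Bᵀ S = Bᵀ S Γ`. -/
theorem statement_11 {d K : ℕ} (hd : 2 ≤ d) (hK : 1 ≤ K)
    (g : Fin d → Fin K) (hg : Function.Surjective g)
    (S : Matrix (PairIdx d) (PairIdx d) ℝ) (hS : inSG g S) :
    (blockMembership g)ᵀ * S = (blockMembership g)ᵀ * S * Gamma g := by
  classical
  obtain ⟨_, hS2⟩ := hS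
  ext ℓ s
  simp only [Matrix.mul_apply, Matrix.transpose_apply]
  let F : PairIdx d → ℝ := fun t => ∑ r, blockMembership g r ℓ * S r t
  show F s = ∑ t, F t * Gamma g t s
  have hFeq : ∀ t, sameBlock g t s → F t = F s := by
    intro t ht
    obtain ⟨π, hgπ, hor⟩ := exists_perm g ht
    have hts : permPair π t = s := permPair_eq π hor
    have hbij : Function.Bijective (permPair (d := d) π) :=
      Finite.injective_iff_bijective.1 (permPair_injective π)
    have hterm : ∀ x, blockMembership g x ℓ * S x t =
        blockMembership g (permPair π x) ℓ * S (permPair π x) s := by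
      intro x
      have hq : Quotient.mk (blockSetoid g) (permPair π x) = Quotient.mk (blockSetoid g) x :=
        Quotient.sound (sameBlock_permPair g π hgπ x)
      have hB : blockMembership g (permPair π x) ℓ = blockMembership g x ℓ := by
        simp only [blockMembership, Matrix.of_apply, hq]
      have hSx : S (permPair π x) s = S x t := by
        rw [← hts]
        exact hS2 (permPair π x) x (permPair π t) t (sameBlock_permPair g π hgπ x)
          (sameBlock_permPair g π hgπ t) (overlap_permPair g π hgπ x t)
      rw [hB, hSx]
    exact Fintype.sum_bijective (permPair π) hbij _ _ hterm
  have hssb : sameBlock g s s := Or.inl ⟨rfl, rfl⟩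
  have hbc : blockCard g s ≠ 0 := by
    unfold blockCard
    exact Finset.card_ne_zero_of_mem (Finset.mem_filter.2 ⟨Finset.mem_univ s, hssb⟩)
  have hbcR : (blockCard g s : ℝ) ≠ 0 := Nat.cast_ne_zero.2 hbc
  have hterm2 : ∀ t, F t * Gamma g t s =
      if sameBlock g t s then F s * (1 / (blockCard g s : ℝ)) else 0 := by
    intro t
    by_cases h : sameBlock g t s
    · rw [if_pos h]
      simp only [Gamma, Matrix.of_apply, if_pos h, hFeq t h, blockCard_eq g h]
    · simp [Gamma, Matrix.of_apply, h]
  rw [Finset.sum_congr rfl (fun t _ => hterm2 t), ← Finset.sum_filter, Finset.sum_const]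
  have hcard : (Finset.univ.filter fun t => sameBlock g t s).card = blockCard g s := by
    unfold blockCard
    congr 1
    ext t
    simp only [Finset.mem_filter, Finset.mem_univ, true_and]
    exact ⟨fun h => (blockSetoid g).iseqv.symm h, fun h => (blockSetoid g).iseqv.symm h⟩
  rw [hcard, nsmul_eq_mul]
  field_simp
end

section
/- If R ∈ 𝒯_𝒢^† is invertible, then R⁻¹ ∈ 𝒯_𝒢^†. -/
open Matrix

/-- A `d×d` matrix is `𝒢`-constant (for the partition given by the cluster map `g`) if
`M_{i₁j₁} = M_{i₂j₂}` whenever `g i₁ = g i₂`, `g j₁ = g j₂`, and `i₁ = j₁ ↔ i₂ = j₂`. -/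
def GConst {d K : ℕ} (g : Fin d → Fin K) (M : Matrix (Fin d) (Fin d) ℝ) : Prop :=
  ∀ i₁ j₁ i₂ j₂ : Fin d, g i₁ = g i₂ → g j₁ = g j₂ → (i₁ = j₁ ↔ i₂ = j₂) →
    M i₁ j₁ = M i₂ j₂

/-- Given compatible pairs, there is a `g`-preserving permutation taking one pair to the other. -/
lemma exists_perm_s17 {d K : ℕ} (g : Fin d → Fin K) (i₁ j₁ i₂ j₂ : Fin d)
    (hi : g i₁ = g i₂) (hj : g j₁ = g j₂) (hij : i₁ = j₁ ↔ i₂ = j₂) :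
    ∃ σ : Equiv.Perm (Fin d), (∀ l, g (σ l) = g l) ∧ σ i₁ = i₂ ∧ σ j₁ = j₂ := by
  by_cases h : i₁ = j₁
  · subst h
    have h2 : i₂ = j₂ := hij.mp rfl
    subst h2
    refine ⟨Equiv.swap i₁ i₂, fun l => ?_, Equiv.swap_apply_left _ _,
      Equiv.swap_apply_left _ _⟩
    rcases eq_or_ne l i₁ with rfl | hl1
    · rw [Equiv.swap_apply_left, hi]
    rcases eq_or_ne l i₂ with rfl | hl2
    · rw [Equiv.swap_apply_right, hi]
    · rw [Equiv.swap_apply_of_ne_of_ne hl1 hl2]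
  · have h2 : i₂ ≠ j₂ := fun e => h (hij.mpr e)
    set τ₁ := Equiv.swap i₁ i₂ with hτ₁
    set j' := τ₁ j₁ with hj'
    have hgτ₁ : ∀ l, g (τ₁ l) = g l := by
      intro l
      rcases eq_or_ne l i₁ with rfl | hl1
      · rw [hτ₁]; rw [Equiv.swap_apply_left, hi]
      rcases eq_or_ne l i₂ with rfl | hl2
      · rw [hτ₁]; rw [Equiv.swap_apply_right, hi]
      · rw [hτ₁]; rw [Equiv.swap_apply_of_ne_of_ne hl1 hl2]
    have hj'ne : j' ≠ i₂ := by
      rw [hj']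
      intro e
      have : τ₁ j₁ = τ₁ i₁ := by rw [e, hτ₁, Equiv.swap_apply_left]
      exact h (τ₁.injective this).symm
    have hgj' : g j' = g j₂ := by rw [hj', hgτ₁, hj]
    set τ₂ := Equiv.swap j' j₂ with hτ₂
    have hgτ₂ : ∀ l, g (τ₂ l) = g l := by
      intro l
      rcases eq_or_ne l j' with rfl | hl1
      · rw [hτ₂]; rw [Equiv.swap_apply_left, hgj']
      rcases eq_or_ne l j₂ with rfl | hl2
      · rw [hτ₂]; rw [Equiv.swap_apply_right, hgj']
      · rw [hτ₂]; rw [Equiv.swap_apply_of_ne_of_ne hl1 hl2]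
    refine ⟨τ₁.trans τ₂, fun l => ?_, ?_, ?_⟩
    · simp only [Equiv.trans_apply, hgτ₂, hgτ₁]
    · simp only [Equiv.trans_apply]
      rw [hτ₁, Equiv.swap_apply_left, hτ₂,
        Equiv.swap_apply_of_ne_of_ne (Ne.symm hj'ne) h2]
    · simp only [Equiv.trans_apply]
      rw [← hj', hτ₂, Equiv.swap_apply_left]

/-- If `R ∈ 𝒯_𝒢^†` (i.e. `R` is symmetric and `𝒢`-constant) is
invertible, then `R⁻¹ ∈ 𝒯_𝒢^†`. -/
theorem statement_17 {d K : ℕ} (hd : 2 ≤ d) (hK : 1 ≤ K)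
    (g : Fin d → Fin K) (hg : Function.Surjective g)
    (R : Matrix (Fin d) (Fin d) ℝ) (hsymm : R.IsSymm) (hconst : GConst g R)
    (hinv : IsUnit R.det) :
    (R⁻¹).IsSymm ∧ GConst g R⁻¹ := by
  constructor
  · rw [Matrix.IsSymm, Matrix.transpose_nonsing_inv, hsymm.eq]
  · intro i₁ j₁ i₂ j₂ hi hj hij
    obtain ⟨σ, hgσ, hσi, hσj⟩ := exists_perm_s17 g i₁ j₁ i₂ j₂ hi hj hij
    -- R is invariant under σ
    have hRσ : R.submatrix σ σ = R := by
      ext i j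
      exact hconst (σ i) (σ j) i j (hgσ i) (hgσ j)
        ⟨fun e => σ.injective e, fun e => congrArg σ e⟩
    have hRinvσ : R⁻¹.submatrix σ σ = R⁻¹ := by
      have h1 : R * R⁻¹.submatrix σ σ = 1 := by
        calc R * R⁻¹.submatrix σ σ
            = R.submatrix σ σ * R⁻¹.submatrix σ σ := by rw [hRσ]
          _ = (R * R⁻¹).submatrix σ σ := Matrix.submatrix_mul_equiv R R⁻¹ σ σ σ
          _ = (1 : Matrix (Fin d) (Fin d) ℝ).submatrix σ σ := by
              rw [Matrix.mul_nonsing_inv R hinv]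
          _ = 1 := Matrix.submatrix_one_equiv σ
      exact (Matrix.inv_eq_right_inv h1).symm
    calc R⁻¹ i₁ j₁ = R⁻¹.submatrix σ σ i₁ j₁ := by rw [hRinvσ]
      _ = R⁻¹ (σ i₁) (σ j₁) := rfl
      _ = R⁻¹ i₂ j₂ := by rw [hσi, hσj]
end
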